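/- arXiv:2202.07316 — 6 statements merged into one kernel-verified Lean document; each statement's English description precedes it below -/
import Mathlib

section
/- If f is an exact CN function on S with CN form [g : g₁,…,g_r], then -f is an exact CN function on S, with exact CN form obtainable as [2t - g : g₁,…,g_r, g - t] for a new variable t, i.e., there exist convex functions realizing -f as an exact CN function. -/
/-- `f : ℝⁿ → ℝ` is an exact convertible nonconvex (CN) function: there are an
auxiliary dimension `m`, convex objective `g` and convex constraints `gᵢ` such
that every `x` has a feasible `y`, and on the whole feasible set `f x = g x y`. -/
def IsExactCN (n : ℕ) (f : (Fin n → ℝ) → ℝ) : Prop :=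
  ∃ (m r : ℕ) (g : (Fin n → ℝ) → (Fin m → ℝ) → ℝ)
    (gi : Fin r → (Fin n → ℝ) → (Fin m → ℝ) → ℝ),
    ConvexOn ℝ Set.univ (fun p : (Fin n → ℝ) × (Fin m → ℝ) => g p.1 p.2) ∧
    (∀ i, ConvexOn ℝ Set.univ (fun p : (Fin n → ℝ) × (Fin m → ℝ) => gi i p.1 p.2)) ∧
    (∀ x, ∃ y, ∀ i, gi i x y = 0) ∧
    (∀ x y, (∀ i, gi i x y = 0) → f x = g x y)

/-!
Adjoin a new auxiliary variable `t` together with the constraint `g(x, y) - t = 0`, which is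
convex because `t` enters linearly. On the enlarged feasible set `t = g(x, y) = f(x)`, so the
linear, hence convex, objective `-t` equals `-f(x)` everywhere on it.
-/

open Set

section LastCoordinate

variable {E : Type*} {m r : ℕ}

/-- The new variable `t` is stored as the last coordinate of the auxiliary vector `(y, t)`. -/
def valueConstraints (g : E → (Fin m → ℝ) → ℝ) (gi : Fin r → E → (Fin m → ℝ) → ℝ) :
    Fin (r + 1) → E → (Fin (m + 1) → ℝ) → ℝ :=
  Fin.lastCases (fun x y => g x (Fin.init y) - y (Fin.last m))
    (fun i x y => gi i x (Fin.init y))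

theorem valueConstraints_eq_zero_iff {g : E → (Fin m → ℝ) → ℝ}
    {gi : Fin r → E → (Fin m → ℝ) → ℝ} (x : E) (y : Fin (m + 1) → ℝ) :
    (∀ i, valueConstraints g gi i x y = 0) ↔
      (∀ i, gi i x (Fin.init y) = 0) ∧ y (Fin.last m) = g x (Fin.init y) := by
  simp only [Fin.forall_fin_succ', valueConstraints, Fin.lastCases_castSucc,
    Fin.lastCases_last, sub_eq_zero]
  exact and_congr_right' eq_comm

variable [AddCommGroup E] [Module ℝ E]

theorem ConvexOn.comp_init {h : E → (Fin m → ℝ) → ℝ}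
    (hh : ConvexOn ℝ univ (fun p : E × (Fin m → ℝ) => h p.1 p.2)) :
    ConvexOn ℝ univ (fun p : E × (Fin (m + 1) → ℝ) => h p.1 (Fin.init p.2)) :=
  hh.comp_linearMap (LinearMap.id.prodMap (LinearMap.funLeft ℝ ℝ Fin.castSucc))

theorem convexOn_neg_last :
    ConvexOn ℝ univ (fun p : E × (Fin (m + 1) → ℝ) => -p.2 (Fin.last m)) :=
  (-(LinearMap.proj (Fin.last m) ∘ₗ LinearMap.snd ℝ E (Fin (m + 1) → ℝ))).convexOn convex_univ

theorem convexOn_valueConstraints {g : E → (Fin m → ℝ) → ℝ}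
    {gi : Fin r → E → (Fin m → ℝ) → ℝ}
    (hg : ConvexOn ℝ univ (fun p : E × (Fin m → ℝ) => g p.1 p.2))
    (hgi : ∀ i, ConvexOn ℝ univ (fun p : E × (Fin m → ℝ) => gi i p.1 p.2)) (i : Fin (r + 1)) :
    ConvexOn ℝ univ (fun p : E × (Fin (m + 1) → ℝ) => valueConstraints g gi i p.1 p.2) := by
  induction i using Fin.lastCases with
  | last =>
    simpa only [valueConstraints, Fin.lastCases_last, sub_eq_add_neg, Pi.add_def] using
      hg.comp_init.add convexOn_neg_last
  | cast i =>
    simpa only [valueConstraints, Fin.lastCases_castSucc] using (hgi i).comp_init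

end LastCoordinate

/-- If `f` is an exact CN function, so is `-f`. -/
theorem neg_exact_CN (n : ℕ) (f : (Fin n → ℝ) → ℝ) (hf : IsExactCN n f) :
    IsExactCN n (fun x => -f x) := by
  obtain ⟨m, r, g, gi, hg, hgi, hfeas, hval⟩ := hf
  refine ⟨m + 1, r + 1, fun _ y => -y (Fin.last m), valueConstraints g gi,
    convexOn_neg_last, convexOn_valueConstraints hg hgi, fun x => ?_, fun x y hy => ?_⟩
  · obtain ⟨y, hy⟩ := hfeas x
    refine ⟨Fin.snoc y (g x y), (valueConstraints_eq_zero_iff x _).2 ?_⟩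
    simpa only [Fin.init_snoc, Fin.snoc_last, and_true] using hy
  · obtain ⟨hyi, ht⟩ := (valueConstraints_eq_zero_iff x y).1 hy
    simp only [ht, hval x _ hyi]
end

section
/- If f₁ and f₂ are exact CN functions on S (with CN forms over auxiliary variable spaces ℝ^{m₁}, ℝ^{m₂}), then for any real scalars α₁, α₂ the function α₁f₁ + α₂f₂ is an exact CN function on the corresponding product domain. -/
open Set

lemma ConvexOn.univ_comp_linearMap {E F : Type*} [AddCommGroup E] [Module ℝ E]
    [AddCommGroup F] [Module ℝ F] {g : F → ℝ} (hg : ConvexOn ℝ univ g) (L : E →ₗ[ℝ] F) :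
    ConvexOn ℝ univ (fun p => g (L p)) := by
  have hgL := hg.comp_linearMap L
  rwa [preimage_univ] at hgL

structure IsExactCNForm {E Y ι : Type*} [AddCommGroup E] [Module ℝ E] [AddCommGroup Y]
    [Module ℝ Y] (f : E → ℝ) (g : E × Y → ℝ) (c : ι → E × Y → ℝ) : Prop where
  convexOn_obj : ConvexOn ℝ univ g
  convexOn_constr : ∀ i, ConvexOn ℝ univ (c i)
  feasible : ∀ x, ∃ y, ∀ i, c i (x, y) = 0
  eq_obj : ∀ x y, (∀ i, c i (x, y) = 0) → f x = g (x, y)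

namespace IsExactCNForm

variable {E Y Y' ι ι' : Type*} [AddCommGroup E] [Module ℝ E] [AddCommGroup Y] [Module ℝ Y]
  [AddCommGroup Y'] [Module ℝ Y'] {f : E → ℝ} {g : E × Y → ℝ} {c : ι → E × Y → ℝ}

lemma comp_equiv (h : IsExactCNForm f g c) (e : Y' ≃ₗ[ℝ] Y) (σ : ι' ≃ ι) :
    IsExactCNForm f (fun p => g (p.1, e p.2)) (fun i p => c (σ i) (p.1, e p.2)) where
  convexOn_obj :=
    h.convexOn_obj.univ_comp_linearMap (LinearMap.prodMap LinearMap.id e.toLinearMap)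
  convexOn_constr i :=
    (h.convexOn_constr (σ i)).univ_comp_linearMap (LinearMap.prodMap LinearMap.id e.toLinearMap)
  feasible x := by
    obtain ⟨y, hy⟩ := h.feasible x
    exact ⟨e.symm y, fun i => by simpa using hy (σ i)⟩
  eq_obj x y hy := h.eq_obj x (e y) fun i => by simpa using hy (σ.symm i)

lemma liftObj (h : IsExactCNForm f g c) :
    IsExactCNForm f ((LinearMap.snd ℝ Y ℝ).comp (LinearMap.snd ℝ E (Y × ℝ)))
      (fun o : Option ι => o.elim (fun p => g (p.1, p.2.1) - p.2.2)
        (fun i p => c i (p.1, p.2.1))) where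
  convexOn_obj := LinearMap.convexOn _ convex_univ
  convexOn_constr
    | none =>
      (h.convexOn_obj.univ_comp_linearMap
          (LinearMap.prodMap LinearMap.id (LinearMap.fst ℝ Y ℝ))).sub
          (LinearMap.concaveOn ((LinearMap.snd ℝ Y ℝ).comp (LinearMap.snd ℝ E (Y × ℝ)))
            convex_univ)
    | some i => (h.convexOn_constr i).univ_comp_linearMap
        (LinearMap.prodMap LinearMap.id (LinearMap.fst ℝ Y ℝ))
  feasible x := by
    obtain ⟨y, hy⟩ := h.feasible x
    refine ⟨(y, g (x, y)), fun o => ?_⟩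
    cases o with
    | none => exact sub_self _
    | some i => exact hy i
  eq_obj x y hy := by
    rw [h.eq_obj x y.1 fun i => hy (some i)]
    exact sub_eq_zero.mp (hy none)

lemma const_mul {ℓ : E × Y →ₗ[ℝ] ℝ} (h : IsExactCNForm f ℓ c) (α : ℝ) :
    IsExactCNForm (fun x => α * f x) (α • ℓ) c where
  convexOn_obj := LinearMap.convexOn _ convex_univ
  convexOn_constr := h.convexOn_constr
  feasible := h.feasible
  eq_obj x y hy := by simp [h.eq_obj x y hy]

lemma add {f' : E → ℝ} {g' : E × Y' → ℝ} {c' : ι' → E × Y' → ℝ}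
    (h : IsExactCNForm f g c) (h' : IsExactCNForm f' g' c') :
    IsExactCNForm (fun x => f x + f' x)
      (fun p : E × (Y × Y') => g (p.1, p.2.1) + g' (p.1, p.2.2))
      (Sum.elim (fun i p => c i (p.1, p.2.1)) (fun i p => c' i (p.1, p.2.2))) where
  convexOn_obj :=
    (h.convexOn_obj.univ_comp_linearMap
        (LinearMap.prodMap LinearMap.id (LinearMap.fst ℝ Y Y'))).add
      (h'.convexOn_obj.univ_comp_linearMap
        (LinearMap.prodMap LinearMap.id (LinearMap.snd ℝ Y Y')))
  convexOn_constr
    | .inl i => (h.convexOn_constr i).univ_comp_linearMap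
        (LinearMap.prodMap LinearMap.id (LinearMap.fst ℝ Y Y'))
    | .inr i => (h'.convexOn_constr i).univ_comp_linearMap
        (LinearMap.prodMap LinearMap.id (LinearMap.snd ℝ Y Y'))
  feasible x := by
    obtain ⟨y, hy⟩ := h.feasible x
    obtain ⟨y', hy'⟩ := h'.feasible x
    exact ⟨(y, y'), Sum.rec hy hy'⟩
  eq_obj x y hy := by
    rw [h.eq_obj x y.1 fun i => hy (.inl i), h'.eq_obj x y.2 fun i => hy (.inr i)]

end IsExactCNForm

lemma IsExactCN.exists_form {n : ℕ} {f : (Fin n → ℝ) → ℝ} (hf : IsExactCN n f) :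
    ∃ (m r : ℕ) (g : (Fin n → ℝ) × (Fin m → ℝ) → ℝ)
      (c : Fin r → (Fin n → ℝ) × (Fin m → ℝ) → ℝ), IsExactCNForm f g c := by
  obtain ⟨m, r, g, c, hg, hc, hfeas, hobj⟩ := hf
  exact ⟨m, r, fun p => g p.1 p.2, fun i p => c i p.1 p.2, ⟨hg, hc, hfeas, hobj⟩⟩

lemma IsExactCNForm.isExactCN {n : ℕ} {Y ι : Type*} [AddCommGroup Y] [Module ℝ Y]
    [FiniteDimensional ℝ Y] [Finite ι] {f : (Fin n → ℝ) → ℝ}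
    {g : (Fin n → ℝ) × Y → ℝ} {c : ι → (Fin n → ℝ) × Y → ℝ} (h : IsExactCNForm f g c) :
    IsExactCN n f := by
  obtain ⟨hg, hc, hfeas, hobj⟩ :=
    h.comp_equiv (Module.finBasis ℝ Y).equivFun.symm (Finite.equivFin ι).symm
  exact ⟨_, _, fun x y => _, fun i x y => _, hg, hc, hfeas, hobj⟩

/-- Any real linear combination of exact CN functions is an exact CN function. -/
theorem linear_combination_exact_CN (n : ℕ) (f₁ f₂ : (Fin n → ℝ) → ℝ)
    (hf₁ : IsExactCN n f₁) (hf₂ : IsExactCN n f₂) (α₁ α₂ : ℝ) :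
    IsExactCN n (fun x => α₁ * f₁ x + α₂ * f₂ x) := by
  obtain ⟨_, _, _, _, h₁⟩ := hf₁.exists_form
  obtain ⟨_, _, _, _, h₂⟩ := hf₂.exists_form
  exact ((h₁.liftObj.const_mul α₁).add (h₂.liftObj.const_mul α₂)).isExactCN
end

section
/- If φ : ℝ → ℝ is a monotone increasing convex function and f is a CN function with CN form [g : g₁,…,g_r], then φ ∘ f is a CN function with CN form [φ ∘ g : g₁,…,g_r]: φ∘g is convex, and for each x, φ(f(x)) = min over y with gᵢ(x,y)=0 ∀i of φ(g(x,y)). -/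
/-- If `φ` is a monotone increasing convex function and `f` is a CN function with
CN form `[g : g₁,…,g_r]`, then `φ ∘ f` is a CN function with CN form
`[φ ∘ g : g₁,…,g_r]`. -/
theorem comp_monotone_convex_CN (n m r : ℕ)
    (g : (Fin n → ℝ) → (Fin m → ℝ) → ℝ)
    (gi : Fin r → (Fin n → ℝ) → (Fin m → ℝ) → ℝ)
    (f : (Fin n → ℝ) → ℝ) (φ : ℝ → ℝ)
    (hg : ConvexOn ℝ Set.univ (fun p : (Fin n → ℝ) × (Fin m → ℝ) => g p.1 p.2))
    (hgi : ∀ i, ConvexOn ℝ Set.univ (fun p : (Fin n → ℝ) × (Fin m → ℝ) => gi i p.1 p.2))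
    (hφm : Monotone φ) (hφc : ConvexOn ℝ Set.univ φ)
    (hf : ∀ x, ∃ y, (∀ i, gi i x y = 0) ∧ f x = g x y ∧
      ∀ y', (∀ i, gi i x y' = 0) → g x y ≤ g x y') :
    ConvexOn ℝ Set.univ (fun p : (Fin n → ℝ) × (Fin m → ℝ) => φ (g p.1 p.2)) ∧
    ∀ x, ∃ y, (∀ i, gi i x y = 0) ∧ φ (f x) = φ (g x y) ∧
      ∀ y', (∀ i, gi i x y' = 0) → φ (g x y) ≤ φ (g x y') := by
  constructor
  · refine ⟨convex_univ, fun p _ q _ a b ha hb hab => ?_⟩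
    calc φ (g (a • p + b • q).1 (a • p + b • q).2)
        ≤ φ (a * g p.1 p.2 + b * g q.1 q.2) := by
          apply hφm
          simpa using hg.2 (Set.mem_univ p) (Set.mem_univ q) ha hb hab
      _ ≤ a * φ (g p.1 p.2) + b * φ (g q.1 q.2) := by
          simpa using hφc.2 (Set.mem_univ (g p.1 p.2)) (Set.mem_univ (g q.1 q.2)) ha hb hab
  · intro x
    obtain ⟨y, h1, h2, h3⟩ := hf x
    exact ⟨y, h1, by rw [h2], fun y' hy' => hφm (h3 y' hy')⟩
end

section
/- Suppose f is a CN function with CN form [g : g₁,…,g_r], all gᵢ and g convex and differentiable, and (x*,y*) ∈ X(f). If the pure first-order condition ⟪∇g(x*,y*), (x,y) - (x*,y*)⟫ ≥ 0 holds for all (x,y) ∈ X(g) with ⟪∇gᵢ(x*,y*), (x,y)-(x*,y*)⟫ ≤ 0 (i=1..r), then in fact for every feasible (x,y) ∈ X(g) one has g(x,y) ≥ g(x*,y*), hence x* is a global minimizer of f. -/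
/-- Gradient inequality for convex differentiable functions. -/
lemma convexOn_fderiv_le {E : Type*} [NormedAddCommGroup E] [NormedSpace ℝ E]
    (g : E → ℝ) (hg : ConvexOn ℝ Set.univ g) (p q : E)
    (hd : DifferentiableAt ℝ g p) :
    fderiv ℝ g p (q - p) ≤ g q - g p := by
  set v := q - p with hv
  have hL : ∀ t : ℝ, HasDerivAt (fun t : ℝ => p + t • v) v t := by
    intro t
    simpa using ((hasDerivAt_id t).smul_const v).const_add p
  have hfd : HasFDerivAt g (fderiv ℝ g p) (p + (0:ℝ) • v) := by
    simpa using hd.hasFDerivAt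
  have hcomp : HasDerivAt (fun t : ℝ => g (p + t • v)) (fderiv ℝ g p v) 0 :=
    hfd.comp_hasDerivAt 0 (hL 0)
  -- slopes on (0,1] are bounded by g q - g p
  have hslope : ∀ t ∈ Set.Ioc (0:ℝ) 1,
      (g (p + t • v) - g p) / t ≤ g q - g p := by
    intro t ht
    obtain ⟨-, hsm⟩ := hg
    have hconv := hsm (Set.mem_univ p) (Set.mem_univ q)
      (a := 1 - t) (b := t) (by linarith [ht.2]) (le_of_lt ht.1) (by ring)
    have hpt : (1 - t) • p + t • q = p + t • v := by
      simp only [hv, smul_sub]; module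
    rw [hpt] at hconv
    rw [div_le_iff₀ ht.1]
    have : g (p + t • v) ≤ g p + t * (g q - g p) := by
      simpa [smul_eq_mul] using hconv.trans_eq (by simp [smul_eq_mul]; ring)
    linarith
  have htend : Filter.Tendsto (fun t : ℝ => (g (p + t • v) - g p) / t)
      (nhdsWithin 0 (Set.Ioi 0)) (nhds (fderiv ℝ g p v)) := by
    have := hcomp.tendsto_slope_zero_right
    simpa [div_eq_inv_mul] using this
  refine le_of_tendsto htend ?_
  filter_upwards [Ioc_mem_nhdsGT_of_mem (by norm_num : (0:ℝ) ∈ Set.Ico 0 1)] with t ht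
  exact hslope t ht

/-- First-order sufficient condition: if at a CN point `(x*,y*)` the directional
derivative of `g` is nonnegative on the linearized cone, then `(x*,y*)` globally
minimizes `g` over the feasible set and `x*` globally minimizes `f`. -/
theorem first_order_sufficient_global (n m r : ℕ)
    (g : ((Fin n → ℝ) × (Fin m → ℝ)) → ℝ)
    (gi : Fin r → ((Fin n → ℝ) × (Fin m → ℝ)) → ℝ)
    (f : (Fin n → ℝ) → ℝ)
    (hg : ConvexOn ℝ Set.univ g) (hgd : Differentiable ℝ g)
    (hgi : ∀ i, ConvexOn ℝ Set.univ (gi i)) (hgid : ∀ i, Differentiable ℝ (gi i))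
    (hCNex : ∀ x, ∃ y, (∀ i, gi i (x, y) = 0) ∧ f x = g (x, y))
    (p : (Fin n → ℝ) × (Fin m → ℝ))
    (hfeas : ∀ i, gi i p = 0) (hfp : f p.1 = g p)
    (hfo : ∀ q : (Fin n → ℝ) × (Fin m → ℝ), (∀ i, gi i q = 0) →
      (∀ i, fderiv ℝ (gi i) p (q - p) ≤ 0) → 0 ≤ fderiv ℝ g p (q - p)) :
    (∀ q : (Fin n → ℝ) × (Fin m → ℝ), (∀ i, gi i q = 0) → g p ≤ g q) ∧
    (∀ x, f p.1 ≤ f x) := by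
  have key : ∀ q : (Fin n → ℝ) × (Fin m → ℝ), (∀ i, gi i q = 0) → g p ≤ g q := by
    intro q hq
    have hlin : ∀ i, fderiv ℝ (gi i) p (q - p) ≤ 0 := by
      intro i
      have := convexOn_fderiv_le (gi i) (hgi i) p q ((hgid i).differentiableAt)
      rw [hq i, hfeas i] at this; linarith
    have h1 : 0 ≤ fderiv ℝ g p (q - p) := hfo q hq hlin
    have h2 := convexOn_fderiv_le g hg p q hgd.differentiableAt
    linarith
  refine ⟨key, fun x => ?_⟩
  obtain ⟨y, hy, hfx⟩ := hCNex x
  rw [hfp, hfx]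
  exact key (x, y) hy
end

section
/- Let f be a weak uniform CN function with CN form [g : g₁,…,g_r] and matrix B(x*,y*) positive semidefinite at (x*,y*) ∈ X(f). If d* minimizes the quadratic q(d) = ⟪∇g(x*,y*), d⟫ + (1/2) dᵀB(x*,y*) d over the cone T(x*,y*) = {d : ⟪∇gᵢ(x*,y*), d⟫ ≤ 0, i=1..r} and q(d*) ≥ 0, then (x*,y*) is a global optimal solution of min g over X(g), and x* is a global minimizer of f. -/
/-!
For a feasible point `q`, convexity of each `gᵢ` makes `d = q - p` a direction of the linearized
cone, since `⟪∇gᵢ(p), d⟫ ≤ gᵢ(q) - gᵢ(p) = 0`. Weak uniform convexity of `g` and minimality of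
`d*` on that cone then give `g(q) - g(p) ≥ q(d) ≥ q(d*) ≥ 0`. Minimality of `x*` for `f` follows
because every value `f(x)` is attained as `g(x, y)` at some feasible `(x, y)`.
-/

theorem ConvexOn.fderiv_sub_le {E : Type*} [NormedAddCommGroup E] [NormedSpace ℝ E]
    {s : Set E} {φ : E → ℝ} (hφ : ConvexOn ℝ s φ) {p q : E} (hp : p ∈ s) (hq : q ∈ s)
    (hd : DifferentiableAt ℝ φ p) : fderiv ℝ φ p (q - p) ≤ φ q - φ p := by
  set ℓ : ℝ →ᵃ[ℝ] E := AffineMap.lineMap p q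
  have hline : HasDerivAt (φ ∘ ℓ) (fderiv ℝ φ p (q - p)) 0 := by
    have hℓ : HasDerivAt ℓ (q - p) 0 := AffineMap.hasDerivAt_lineMap
    have hd' : DifferentiableAt ℝ φ (ℓ 0) := by simpa [ℓ] using hd
    simpa [ℓ] using hd'.hasFDerivAt.comp_hasDerivAt 0 hℓ
  have hslope := (hφ.comp_affineMap ℓ).le_slope_of_hasDerivAt (x := 0) (y := 1)
    (by simpa [ℓ] using hp) (by simpa [ℓ] using hq) zero_lt_one hline
  simpa [slope_def_field, ℓ] using hslope

theorem weak_uniform_CN_sufficient_global_general (n m r : ℕ)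
    (g : ((Fin n → ℝ) × (Fin m → ℝ)) → ℝ)
    (gi : Fin r → ((Fin n → ℝ) × (Fin m → ℝ)) → ℝ)
    (f : (Fin n → ℝ) → ℝ)
    (B : ((Fin n → ℝ) × (Fin m → ℝ)) →
      ((Fin n → ℝ) × (Fin m → ℝ)) →ₗ[ℝ] ((Fin n → ℝ) × (Fin m → ℝ)) →ₗ[ℝ] ℝ)
    (hgi : ∀ i, ConvexOn ℝ Set.univ (gi i)) (hgid : ∀ i, Differentiable ℝ (gi i))
    (hwuc : ∀ z d, g (z + d) - g z ≥ fderiv ℝ g z d + (1 / 2) * B z d d)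
    (hCNex : ∀ x, ∃ y, (∀ i, gi i (x, y) = 0) ∧ f x = g (x, y))
    (p : (Fin n → ℝ) × (Fin m → ℝ))
    (hfeas : ∀ i, gi i p = 0) (hfp : f p.1 = g p)
    (dstar : (Fin n → ℝ) × (Fin m → ℝ))
    (hdmin : ∀ d, (∀ i, fderiv ℝ (gi i) p d ≤ 0) →
      fderiv ℝ g p dstar + (1 / 2) * B p dstar dstar
        ≤ fderiv ℝ g p d + (1 / 2) * B p d d)
    (hq : 0 ≤ fderiv ℝ g p dstar + (1 / 2) * B p dstar dstar) :
    (∀ q : (Fin n → ℝ) × (Fin m → ℝ), (∀ i, gi i q = 0) → g p ≤ g q) ∧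
    (∀ x, f p.1 ≤ f x) := by
  have hcone : ∀ q, (∀ i, gi i q = 0) → ∀ i, fderiv ℝ (gi i) p (q - p) ≤ 0 := fun q hq i => by
    simpa [hfeas i, hq i] using
      (hgi i).fderiv_sub_le (Set.mem_univ p) (Set.mem_univ q) (hgid i p)
  have hglobal : ∀ q, (∀ i, gi i q = 0) → g p ≤ g q := fun q hq => by
    have hgrowth := hwuc p (q - p)
    rw [add_sub_cancel] at hgrowth
    linarith [hdmin _ (hcone q hq)]
  refine ⟨hglobal, fun x => ?_⟩
  obtain ⟨y, hy, hfx⟩ := hCNex x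
  rw [hfp, hfx]
  exact hglobal (x, y) hy

/-- Theorem 3.1: if `d*` minimizes the quadratic model
`q(d) = ⟪∇g(x*,y*), d⟫ + ½ dᵀB(x*,y*)d` over the linearized cone and `q(d*) ≥ 0`,
then `(x*,y*)` is a global minimizer of `g` over the feasible set and `x*` is a
global minimizer of the weak uniform CN function `f`. -/
theorem weak_uniform_CN_sufficient_global (n m r : ℕ)
    (g : ((Fin n → ℝ) × (Fin m → ℝ)) → ℝ)
    (gi : Fin r → ((Fin n → ℝ) × (Fin m → ℝ)) → ℝ)
    (f : (Fin n → ℝ) → ℝ)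
    (B : ((Fin n → ℝ) × (Fin m → ℝ)) →
      ((Fin n → ℝ) × (Fin m → ℝ)) →ₗ[ℝ] ((Fin n → ℝ) × (Fin m → ℝ)) →ₗ[ℝ] ℝ)
    (hgd : Differentiable ℝ g)
    (hgi : ∀ i, ConvexOn ℝ Set.univ (gi i)) (hgid : ∀ i, Differentiable ℝ (gi i))
    (hBpsd : ∀ z d, 0 ≤ B z d d)
    (hwuc : ∀ z d, g (z + d) - g z ≥ fderiv ℝ g z d + (1 / 2) * B z d d)
    (hCNex : ∀ x, ∃ y, (∀ i, gi i (x, y) = 0) ∧ f x = g (x, y))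
    (p : (Fin n → ℝ) × (Fin m → ℝ))
    (hfeas : ∀ i, gi i p = 0) (hfp : f p.1 = g p)
    (dstar : (Fin n → ℝ) × (Fin m → ℝ))
    (hdT : ∀ i, fderiv ℝ (gi i) p dstar ≤ 0)
    (hdmin : ∀ d, (∀ i, fderiv ℝ (gi i) p d ≤ 0) →
      fderiv ℝ g p dstar + (1 / 2) * B p dstar dstar
        ≤ fderiv ℝ g p d + (1 / 2) * B p d d)
    (hq : 0 ≤ fderiv ℝ g p dstar + (1 / 2) * B p dstar dstar) :
    (∀ q : (Fin n → ℝ) × (Fin m → ℝ), (∀ i, gi i q = 0) → g p ≤ g q) ∧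
    (∀ x, f p.1 ≤ f x) :=
  weak_uniform_CN_sufficient_global_general n m r g gi f B hgi hgid hwuc hCNex p hfeas hfp dstar
    hdmin hq
end

section
/- In Example (EX8), the point x* = (0,0) is a global minimizer of f(x₁,x₂) = (x₁+x₂-1)² + λ(|x₁|^{1/2} + |x₂|^{1/2}) over ℝ² whenever λ ≥ (4/3)√(2/3): for all (x₁,x₂) ∈ ℝ², (x₁+x₂-1)² + λ(|x₁|^{1/2}+|x₂|^{1/2}) ≥ 1 = f(0,0). -/
/-- Example (EX8): for `λ ≥ (4/3)√(2/3)`, the point `(0,0)` is a global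
minimizer of `f(x₁,x₂) = (x₁+x₂-1)² + λ(√|x₁| + √|x₂|)`, with value `1`. -/
theorem EX8_global_min (lam : ℝ) (hlam : lam ≥ (4 / 3) * Real.sqrt (2 / 3)) :
    ∀ x₁ x₂ : ℝ,
      (x₁ + x₂ - 1) ^ 2 + lam * (Real.sqrt |x₁| + Real.sqrt |x₂|) ≥ 1 := by
  intro x₁ x₂
  set c := Real.sqrt (2 / 3) with hc_def
  have hc0 : 0 ≤ c := Real.sqrt_nonneg _
  have hc2 : c ^ 2 = 2 / 3 := Real.sq_sqrt (by norm_num)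
  have hlam0 : 0 ≤ lam := le_trans (by positivity) hlam
  set s := x₁ + x₂ with hs
  set t := Real.sqrt |s| with ht_def
  have ht0 : 0 ≤ t := Real.sqrt_nonneg _
  have ht2 : t ^ 2 = |s| := Real.sq_sqrt (abs_nonneg _)
  -- √|x₁| + √|x₂| ≥ √|s|
  have h1 : Real.sqrt |x₁| + Real.sqrt |x₂| ≥ t := by
    have hu2 : Real.sqrt |x₁| ^ 2 = |x₁| := Real.sq_sqrt (abs_nonneg _)
    have hv2 : Real.sqrt |x₂| ^ 2 = |x₂| := Real.sq_sqrt (abs_nonneg _)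
    have habs : |s| ≤ |x₁| + |x₂| := abs_add_le _ _
    nlinarith [Real.sqrt_nonneg |x₁|, Real.sqrt_nonneg |x₂|,
      mul_nonneg (Real.sqrt_nonneg |x₁|) (Real.sqrt_nonneg |x₂|), ht0, ht2]
  have key : t ^ 3 - 2 * t + lam ≥ 0 := by
    nlinarith [sq_nonneg (t - c), mul_nonneg (sq_nonneg (t - c)) (by linarith : (0:ℝ) ≤ t + 2*c)]
  have habs_s : s ≤ |s| := le_abs_self s
  have hsq : s ^ 2 = |s| ^ 2 := (sq_abs s).symm
  have h2 : (s - 1) ^ 2 + lam * t ≥ 1 := by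
    nlinarith [mul_nonneg ht0 key, ht2, habs_s, hsq]
  nlinarith [mul_le_mul_of_nonneg_left h1 hlam0]
end
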